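/- arXiv:1407.0693 — 2 statements merged into one kernel-verified Lean document; each statement's English description precedes it below -/
import Mathlib

section
/- The Hausdorff dimension of the space of pointed trees (X_2, d_2) associated to the free group F_2 on two generators is infinite: dim_H(X_2) = ∞. -/
open Filter
open scoped ENNReal

noncomputable section

namespace GraphTrees

/-- The word length of an element of a free group: the length of its reduced word. -/
def wlen {n : ℕ} (g : FreeGroup (Fin n)) : ℕ := (FreeGroup.toWord g).length

/-- `h` is a prefix of `g`. -/
def IsPref {n : ℕ} (h g : FreeGroup (Fin n)) : Prop :=
  wlen h + wlen (h⁻¹ * g) = wlen g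

/-- Vertex sets of infinite connected subtrees of the Cayley graph of the free group on
`n` generators which contain the identity: subsets containing `1`, infinite, and
prefix-closed. -/
def IsTree {n : ℕ} (S : Set (FreeGroup (Fin n))) : Prop :=
  1 ∈ S ∧ S.Infinite ∧ ∀ g ∈ S, ∀ h : FreeGroup (Fin n), IsPref h g → h ∈ S

/-- The space `X n` of pointed trees. -/
def X (n : ℕ) : Type := {S : Set (FreeGroup (Fin n)) // IsTree S}

variable {n : ℕ}

/-- The pattern `B_S(m)` of radius `m` of a pointed tree. -/
def ball (S : X n) (m : ℕ) : Set (FreeGroup (Fin n)) := {g ∈ S.1 | wlen g ≤ m}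

/-- The set of radii on which two pointed trees have the same pattern. -/
def agreeSet (S S' : X n) : Set ℕ := {m | ball S m = ball S' m}

/-- The ball metric on the space of pointed trees. -/
def tdist (S S' : X n) : ℝ :=
  letI := Classical.propDecidable (S = S')
  if S = S' then 0 else Real.exp (-((sSup (agreeSet S S') : ℕ) : ℝ))

theorem tdist_eq_of_ne {x y : X n} (h : x ≠ y) :
    tdist x y = Real.exp (-((sSup (agreeSet x y) : ℕ) : ℝ)) := by
  unfold tdist
  rw [if_neg h]

theorem ball_mono_eq {x y : X n} {k m : ℕ} (hkm : k ≤ m)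
    (h : ball x m = ball y m) : ball x k = ball y k := by
  ext g
  constructor
  · rintro ⟨hg, hlen⟩
    have hx : g ∈ ball x m := ⟨hg, hlen.trans hkm⟩
    rw [h] at hx
    exact ⟨hx.1, hlen⟩
  · rintro ⟨hg, hlen⟩
    have hy : g ∈ ball y m := ⟨hg, hlen.trans hkm⟩
    rw [← h] at hy
    exact ⟨hy.1, hlen⟩

theorem eq_of_agree_all {x y : X n} (h : ∀ m, ball x m = ball y m) : x = y := by
  apply Subtype.ext
  ext g
  constructor
  · intro hg
    have hx : g ∈ ball x (wlen g) := ⟨hg, le_rfl⟩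
    rw [h] at hx
    exact hx.1
  · intro hg
    have hy : g ∈ ball y (wlen g) := ⟨hg, le_rfl⟩
    rw [← h] at hy
    exact hy.1

theorem bddAbove_agreeSet {x y : X n} (h : x ≠ y) : BddAbove (agreeSet x y) := by
  by_contra hb
  refine h (eq_of_agree_all fun m => ?_)
  rcases not_bddAbove_iff.mp hb m with ⟨k, hk, hmk⟩
  exact ball_mono_eq hmk.le hk

theorem ball_zero (x : X n) : ball x 0 = {1} := by
  ext g
  simp only [ball, Set.mem_setOf_eq, Nat.le_zero, Set.mem_singleton_iff]
  constructor
  · rintro ⟨hg, hlen⟩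
    exact FreeGroup.toWord_eq_nil_iff.mp (List.length_eq_zero_iff.mp hlen)
  · rintro rfl
    exact ⟨x.2.1, by simp [wlen]⟩

theorem zero_mem_agreeSet (x y : X n) : (0 : ℕ) ∈ agreeSet x y := by
  show ball x 0 = ball y 0
  rw [ball_zero, ball_zero]

theorem tdist_nonneg (x y : X n) : 0 ≤ tdist x y := by
  rcases eq_or_ne x y with rfl | h
  · unfold tdist
    rw [if_pos rfl]
  · rw [tdist_eq_of_ne h]
    exact (Real.exp_pos _).le

theorem tdist_self (x : X n) : tdist x x = 0 := by
  unfold tdist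
  rw [if_pos rfl]

theorem tdist_comm (x y : X n) : tdist x y = tdist y x := by
  by_cases h : x = y
  · subst h; rfl
  · have hs : agreeSet x y = agreeSet y x := by
      ext m
      exact eq_comm
    rw [tdist_eq_of_ne h, tdist_eq_of_ne (Ne.symm h), hs]

theorem tdist_ultra (x y z : X n) : tdist x z ≤ max (tdist x y) (tdist y z) := by
  rcases eq_or_ne x z with rfl | hxz
  · exact le_max_of_le_left (by rw [tdist_self]; exact tdist_nonneg x y)
  rcases eq_or_ne x y with rfl | hxy
  · exact le_max_of_le_right le_rfl
  rcases eq_or_ne y z with rfl | hyz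
  · exact le_max_of_le_left le_rfl
  have hbxy := bddAbove_agreeSet hxy
  have hbyz := bddAbove_agreeSet hyz
  have hbxz := bddAbove_agreeSet hxz
  have hma : sSup (agreeSet x y) ∈ agreeSet x y :=
    Nat.sSup_mem ⟨0, zero_mem_agreeSet x y⟩ hbxy
  have hmb : sSup (agreeSet y z) ∈ agreeSet y z :=
    Nat.sSup_mem ⟨0, zero_mem_agreeSet y z⟩ hbyz
  have hmin : min (sSup (agreeSet x y)) (sSup (agreeSet y z)) ∈ agreeSet x z := by
    have h1 : ball x (min (sSup (agreeSet x y)) (sSup (agreeSet y z)))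
        = ball y (min (sSup (agreeSet x y)) (sSup (agreeSet y z))) :=
      ball_mono_eq (min_le_left _ _) hma
    have h2 : ball y (min (sSup (agreeSet x y)) (sSup (agreeSet y z)))
        = ball z (min (sSup (agreeSet x y)) (sSup (agreeSet y z))) :=
      ball_mono_eq (min_le_right _ _) hmb
    exact h1.trans h2
  have hle : min (sSup (agreeSet x y)) (sSup (agreeSet y z)) ≤ sSup (agreeSet x z) :=
    le_csSup hbxz hmin
  rw [tdist_eq_of_ne hxz, tdist_eq_of_ne hxy, tdist_eq_of_ne hyz]
  rcases le_total (sSup (agreeSet x y)) (sSup (agreeSet y z)) with hab | hab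
  · refine le_max_of_le_left (Real.exp_le_exp.mpr ?_)
    have h2 : ((sSup (agreeSet x y) : ℕ) : ℝ) ≤ ((sSup (agreeSet x z) : ℕ) : ℝ) := by
      exact_mod_cast (min_eq_left hab) ▸ hle
    linarith
  · refine le_max_of_le_right (Real.exp_le_exp.mpr ?_)
    have h2 : ((sSup (agreeSet y z) : ℕ) : ℝ) ≤ ((sSup (agreeSet x z) : ℕ) : ℝ) := by
      exact_mod_cast (min_eq_right hab) ▸ hle
    linarith

theorem tdist_triangle (x y z : X n) : tdist x z ≤ tdist x y + tdist y z :=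
  (tdist_ultra x y z).trans
    (max_le (le_add_of_nonneg_right (tdist_nonneg y z))
      (le_add_of_nonneg_left (tdist_nonneg x y)))

instance : MetricSpace (X n) where
  dist := tdist
  dist_self := tdist_self
  dist_comm := tdist_comm
  dist_triangle := tdist_triangle
  eq_of_dist_eq_zero := by
    intro x y h
    by_contra hne
    have h' : tdist x y = 0 := h
    rw [tdist_eq_of_ne hne] at h'
    exact (Real.exp_pos _).ne' h'

theorem dist_eq_tdist (x y : X n) : dist x y = tdist x y := rfl

/-- The translate `S · g` of a tree `S` by a vertex `g ∈ S`. -/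
def translate {n : ℕ} (S : Set (FreeGroup (Fin n))) (g : FreeGroup (Fin n)) :
    Set (FreeGroup (Fin n)) := (fun h => g⁻¹ * h) '' S

/-- The orbit `O(S) = {S · g : g ∈ S}` of a pointed tree under the pseudogroup action. -/
def orbit (S : X n) : Set (X n) := {S' | ∃ g ∈ S.1, S'.1 = translate S.1 g}

/-- A subset `Y ⊆ X n` is invariant under the pseudogroup action. -/
def Invariant (Y : Set (X n)) : Prop :=
  ∀ S ∈ Y, ∀ g ∈ S.1, ∀ S' : X n, S'.1 = translate S.1 g → S' ∈ Y

/-- `Λ(Z, m)`: the number of distinct patterns of radius `m` of trees in `Z`. -/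
def Lam (Z : Set (X n)) (m : ℕ) : ℕ := ((fun S => ball S m) '' Z).ncard

/-- The lower box dimension of a subset of the space of pointed trees. -/
def lowerBox (Z : Set (X n)) : ℝ≥0∞ :=
  Filter.liminf (fun m : ℕ => ENNReal.ofReal (Real.log (Lam Z m)) / (m : ℝ≥0∞)) Filter.atTop

/-- The upper box dimension of a subset of the space of pointed trees. -/
def upperBox (Z : Set (X n)) : ℝ≥0∞ :=
  Filter.limsup (fun m : ℕ => ENNReal.ofReal (Real.log (Lam Z m)) / (m : ℝ≥0∞)) Filter.atTop


/-!
Over the comb `{a^p b^q : p, q ∈ ℕ}` one may hang, independently for each `(p, q)`, the leaf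
`a^p b^(q+1) a`. There are `m - 1` such leaves of length `m`, so beyond length `k` a tree can
store `k` binary digits per level. Reading them as a binary expansion gives a map `X 2 → ℝ`
onto `[0, 1]`, and trees that agree on the ball of radius `m` share their first `k (m - k)` digits,
so the map is Hölder of exponent `k log 2`. Hence `1 = dimH [0, 1] ≤ dimH X_2 / (k log 2)` for
every `k`.
-/

theorem IsPref.toWord_prefix {h g : FreeGroup (Fin n)} (hp : IsPref h g) :
    h.toWord <+: g.toWord := by
  have hsub := FreeGroup.toWord_mul_sublist h (h⁻¹ * g)
  rw [mul_inv_cancel_left] at hsub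
  rw [hsub.eq_of_length (by rw [List.length_append]; exact hp.symm)]
  exact List.prefix_append _ _

theorem mem_iff_mem_of_ball_eq {S S' : X n} {m : ℕ} (h : ball S m = ball S' m)
    {g : FreeGroup (Fin n)} (hg : wlen g ≤ m) : g ∈ S.1 ↔ g ∈ S'.1 := by
  have : g ∈ ball S m ↔ g ∈ ball S' m := by rw [h]
  simpa [ball, hg] using this

theorem exists_ball_eq_of_ne {S S' : X n} (h : S ≠ S') :
    ∃ m : ℕ, ball S m = ball S' m ∧ dist S S' = Real.exp (-m) :=
  ⟨_, Nat.sSup_mem ⟨0, zero_mem_agreeSet S S'⟩ (bddAbove_agreeSet h), tdist_eq_of_ne h⟩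

end GraphTrees

open scoped NNReal

theorem holderWith_of_dist_le {X Y : Type*} [PseudoMetricSpace X] [PseudoMetricSpace Y]
    {C r : ℝ≥0} {f : X → Y} (h : ∀ x y, dist (f x) (f y) ≤ C * dist x y ^ (r : ℝ)) :
    HolderWith C r f := by
  intro x y
  rw [edist_dist, edist_dist, ENNReal.ofReal_rpow_of_nonneg dist_nonneg r.coe_nonneg,
    ← ENNReal.ofReal_coe_nnreal, ← ENNReal.ofReal_mul C.coe_nonneg]
  exact ENNReal.ofReal_le_ofReal (h x y)

theorem coe_le_dimH_univ_of_holderWith {X : Type*} [EMetricSpace X] {C r : ℝ≥0} {f : X → ℝ}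
    (hf : HolderWith C r f) (hr : 0 < r) (hsurj : Set.Icc 0 1 ⊆ Set.range f) :
    (r : ℝ≥0∞) ≤ dimH (Set.univ : Set X) := by
  have hIcc : dimH (Set.Icc (0 : ℝ) 1) = 1 := by
    rw [Real.dimH_of_mem_nhds (x := 2⁻¹) (Icc_mem_nhds (by norm_num) (by norm_num))]
    simp
  have : 1 ≤ dimH (Set.univ : Set X) / r :=
    hIcc ▸ (dimH_mono hsurj).trans (hf.dimH_range_le hr)
  rwa [ENNReal.le_div_iff_mul_le (by simp [hr.ne']) (by simp), one_mul] at this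

theorem FreeGroup.isReduced_of_forall_snd_eq_true {α : Type*} {L : List (α × Bool)}
    (h : ∀ x ∈ L, x.2 = true) : FreeGroup.IsReduced L :=
  List.Pairwise.isChain <|
    List.pairwise_of_forall_mem_list fun x hx y hy _ => (h x hx).trans (h y hy).symm

namespace GraphTrees

section CombTree

def combWord (p q : ℕ) : List (Fin 2 × Bool) :=
  List.replicate p (0, true) ++ List.replicate q (1, true)

def leafWord (p q : ℕ) : List (Fin 2 × Bool) := combWord p (q + 1) ++ [(0, true)]

theorem not_leafWord_prefix_combWord (p q p' q' : ℕ) : ¬ leafWord p q <+: combWord p' q' := by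
  intro h
  have hsorted : (combWord p' q').Pairwise (fun x y => x.1 ≤ y.1) := by
    simp [combWord, List.pairwise_append, List.pairwise_replicate]
  have := hsorted.sublist h.sublist
  simp [leafWord, combWord, List.pairwise_append, List.pairwise_replicate] at this

theorem leafWord_injective {p q p' q' : ℕ} (h : leafWord p q = leafWord p' q') :
    p = p' ∧ q = q' := by
  have hb := congrArg (List.count (1, true)) h
  have hl := congrArg List.length h
  simp [leafWord, combWord, List.count_replicate] at hb hl
  omega

theorem eq_of_leafWord_prefix {p q p' q' : ℕ} (h : leafWord p q <+: leafWord p' q') :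
    p = p' ∧ q = q' := by
  rcases List.prefix_concat_iff.mp h with h | h
  · exact leafWord_injective h
  · exact absurd h (not_leafWord_prefix_combWord _ _ _ _)

def leaf (p q : ℕ) : FreeGroup (Fin 2) := FreeGroup.mk (leafWord p q)

theorem toWord_leaf (p q : ℕ) : (leaf p q).toWord = leafWord p q := by
  rw [leaf, FreeGroup.toWord_mk, FreeGroup.IsReduced.reduce_eq]
  refine FreeGroup.isReduced_of_forall_snd_eq_true fun x hx => ?_
  simp only [leafWord, combWord, List.mem_append, List.mem_replicate, List.mem_singleton] at hx
  rcases hx with (⟨-, rfl⟩ | ⟨-, rfl⟩) | rfl <;> rfl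

theorem wlen_leaf (p q : ℕ) : wlen (leaf p q) = p + q + 2 := by
  simp only [wlen, toWord_leaf, leafWord, combWord, List.length_append, List.length_replicate,
    List.length_cons, List.length_nil]
  omega

def combWords (A : Set (ℕ × ℕ)) : Set (List (Fin 2 × Bool)) :=
  {L | ∃ p q, L <+: combWord p q ∨ (p, q) ∈ A ∧ L <+: leafWord p q}

theorem isTree_combWords (A : Set (ℕ × ℕ)) :
    IsTree {g : FreeGroup (Fin 2) | g.toWord ∈ combWords A} := by
  refine ⟨⟨0, 0, Or.inl (by simp)⟩, ?_, ?_⟩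
  · refine Set.infinite_of_injective_forall_mem (f := fun p : ℕ => FreeGroup.of 0 ^ p)
      (fun p p' h => ?_) fun p => ⟨p, 0, Or.inl (by simp [FreeGroup.toWord_of_pow, combWord])⟩
    simpa [FreeGroup.toWord_of_pow] using congrArg (List.length ∘ FreeGroup.toWord) h
  · rintro g ⟨p, q, hg⟩ h hpre
    exact ⟨p, q, hg.imp hpre.toWord_prefix.trans (And.imp_right hpre.toWord_prefix.trans)⟩

def combTree (A : Set (ℕ × ℕ)) : X 2 := ⟨_, isTree_combWords A⟩

theorem leaf_mem_combTree_iff {A : Set (ℕ × ℕ)} {p q : ℕ} :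
    leaf p q ∈ (combTree A).1 ↔ (p, q) ∈ A := by
  refine ⟨?_, fun h => ⟨p, q, Or.inr ⟨h, by rw [toWord_leaf]⟩⟩⟩
  rintro ⟨p', q', h | ⟨hA, h⟩⟩ <;> rw [toWord_leaf] at h
  · exact absurd h (not_leafWord_prefix_combWord _ _ _ _)
  · obtain ⟨rfl, rfl⟩ := eq_of_leafWord_prefix h
    exact hA

end CombTree

section Coding

variable {k : ℕ}

def codeTree (k : ℕ) (d : ℕ → Fin 2) : X 2 :=
  combTree {pq | pq.2 < k ∧ d (pq.1 * k + pq.2) = 1}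

open Classical in
def readDigits (k : ℕ) (S : X 2) (i : ℕ) : Fin 2 :=
  if leaf (i / k) (i % k) ∈ S.1 then 1 else 0

theorem readDigits_codeTree (hk : 0 < k) (d : ℕ → Fin 2) : readDigits k (codeTree k d) = d := by
  funext i
  have hmem : leaf (i / k) (i % k) ∈ (codeTree k d).1 ↔ d i = 1 := by
    rw [codeTree, leaf_mem_combTree_iff]
    simp [Nat.mod_lt i hk, Nat.div_add_mod']
  unfold readDigits
  rw [hmem]
  split_ifs with h
  · exact h.symm
  · omega

theorem readDigits_eq_of_ball_eq (hk : 0 < k) {S S' : X 2} {m : ℕ} (h : ball S m = ball S' m)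
    {i : ℕ} (hi : i < k * (m - k)) : readDigits k S i = readDigits k S' i := by
  have hdiv : i / k < m - k := (Nat.div_lt_iff_lt_mul hk).mpr (by rwa [Nat.mul_comm])
  have hwlen : wlen (leaf (i / k) (i % k)) ≤ m := by
    have := Nat.mod_lt i hk
    rw [wlen_leaf]
    generalize i / k = q at hdiv
    omega
  classical
  exact if_congr (mem_iff_mem_of_ball_eq h hwlen) rfl rfl

theorem exp_neg_rpow_mul_log_two (m k : ℕ) :
    Real.exp (-m) ^ (k * Real.log 2) = ((2 : ℝ) ^ (m * k))⁻¹ := by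
  rw [← Real.exp_mul, neg_mul, Real.exp_neg, ← Real.rpow_natCast,
    Real.rpow_def_of_pos two_pos]
  push_cast
  ring_nf

theorem holderWith_ofDigits_readDigits (hk : 0 < k) :
    HolderWith (2 ^ (k * k)) (k * Real.log 2).toNNReal
      (fun S => Real.ofDigits (readDigits k S)) := by
  refine holderWith_of_dist_le fun S S' => ?_
  rcases eq_or_ne S S' with rfl | hne
  · simp only [dist_self]
    positivity
  obtain ⟨m, hball, hdist⟩ := exists_ball_eq_of_ne hne
  have hexp : m * k ≤ k * k + k * (m - k) := by
    rcases le_total m k with h | h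
    · nlinarith
    · rw [← Nat.mul_add, Nat.add_sub_cancel' h, Nat.mul_comm]
  rw [hdist, Real.coe_toNNReal _ (by positivity), exp_neg_rpow_mul_log_two, Real.dist_eq]
  calc |Real.ofDigits (readDigits k S) - Real.ofDigits (readDigits k S')|
      ≤ ((2 : ℝ) ^ (k * (m - k)))⁻¹ :=
        Real.abs_ofDigits_sub_ofDigits_le fun i hi => readDigits_eq_of_ball_eq hk hball hi
    _ = 2 ^ (k * k) * ((2 : ℝ) ^ (k * k + k * (m - k)))⁻¹ := by
        rw [pow_add, mul_inv, ← mul_assoc, mul_inv_cancel₀ (by positivity), one_mul]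
    _ ≤ _ := by
        push_cast
        gcongr
        exact one_le_two

theorem Icc_subset_range_ofDigits_readDigits (hk : 0 < k) :
    Set.Icc 0 1 ⊆ Set.range fun S => Real.ofDigits (readDigits k S) := by
  intro x hx
  obtain ⟨d, -, rfl⟩ := Real.ofDigits_SurjOn one_lt_two hx
  exact ⟨codeTree k d, congrArg Real.ofDigits (readDigits_codeTree hk d)⟩

end Coding

/-- The Hausdorff dimension of the space of pointed trees `(X_2, d_2)` associated to the
free group on two generators is infinite. -/
theorem dimH_X_two_eq_top : dimH (Set.univ : Set (X 2)) = ⊤ := by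
  refine ENNReal.eq_top_of_forall_nnreal_le fun r => ?_
  have hlog := Real.log_pos one_lt_two
  obtain ⟨k, hk⟩ := exists_nat_gt (r / Real.log 2)
  have hk0 : 0 < k := Nat.cast_pos.mp ((div_nonneg r.coe_nonneg hlog.le).trans_lt hk)
  calc (r : ℝ≥0∞) ≤ (k * Real.log 2).toNNReal := by
        exact_mod_cast Real.le_toNNReal_iff_coe_le (by positivity) |>.mpr
          ((div_le_iff₀ hlog).mp hk.le)
    _ ≤ dimH Set.univ :=
        coe_le_dimH_univ_of_holderWith (holderWith_ofDigits_readDigits hk0)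
          (by simp [hk0, hlog]) (Icc_subset_range_ofDigits_readDigits hk0)

end GraphTrees
end
end

section
/- For every integer n ≥ 2, let 𝒞 = {S ∈ X_n : the orbit O(S) is a finite set}. Then dim_H(𝒞) = 0, while the lower box dimension of 𝒞 (and hence also its upper box dimension) is infinite. -/
open Filter
open scoped ENNReal

noncomputable section

namespace GraphTrees

variable {n : ℕ}

/-!
A periodic tree is pinned down by a bounded pattern: pumping along geodesics shows that trees
with at most `k` translates that agree on the ball of radius `k²` are equal, so `𝒞` is a
countable union of finite sets and has Hausdorff dimension `0`. On the other hand, every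
permutation `σ` of `{0, …, m}` yields a periodic tree, the words readable from `0` in the
automaton where `a₁` acts by `v ↦ v + 1` and `a₂` by `σ`; the words `a₁ⁱ a₂ a₁ʲ` detect `σ`
inside the ball of radius `2m + 1`, so `Λ(𝒞, 2m + 1) ≥ (m + 1)!`, which grows faster than any
exponential by Stirling's formula.
-/

open FreeGroup
open scoped Topology

theorem isPref_iff_prefix {h g : FreeGroup (Fin n)} : IsPref h g ↔ h.toWord <+: g.toWord := by
  constructor
  · intro hpref
    have hsub : List.Sublist g.toWord (h.toWord ++ (h⁻¹ * g).toWord) := by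
      simpa using toWord_mul_sublist h (h⁻¹ * g)
    exact ⟨_, (hsub.eq_of_length (by simpa [IsPref, wlen] using hpref.symm)).symm⟩
  · rintro ⟨t, ht⟩
    have hg : g = h * mk t := by rw [← mk_toWord (x := h), mul_mk, ht, mk_toWord]
    have ht_red : IsReduced t :=
      isReduced_toWord.infix (ht ▸ (List.suffix_append h.toWord t).isInfix)
    unfold IsPref wlen
    rw [hg, inv_mul_cancel_left, toWord_mk, ht_red.reduce_eq, ← hg, ← ht, List.length_append]

theorem wlen_mk_take (g : FreeGroup (Fin n)) (i : ℕ) :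
    wlen (mk (g.toWord.take i)) = min i (wlen g) := by
  rw [wlen, toWord_mk, (isReduced_toWord.infix (g.toWord.take_prefix i).isInfix).reduce_eq,
    List.length_take, wlen]

theorem isPref_mk_take (g : FreeGroup (Fin n)) (i : ℕ) : IsPref (mk (g.toWord.take i)) g := by
  rw [isPref_iff_prefix, toWord_mk,
    (isReduced_toWord.infix (g.toWord.take_prefix i).isInfix).reduce_eq]
  exact g.toWord.take_prefix i

theorem wlen_mul_le (a b : FreeGroup (Fin n)) : wlen (a * b) ≤ wlen a + wlen b :=
  norm_mul_le a b

theorem mem_translate {A : Set (FreeGroup (Fin n))} {g x : FreeGroup (Fin n)} :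
    x ∈ translate A g ↔ g * x ∈ A :=
  ⟨by rintro ⟨y, hy, rfl⟩; simpa using hy, fun h => ⟨g * x, h, by group⟩⟩

theorem reduce_cons_prefix {α : Type*} [DecidableEq α] (a : α × Bool) {p l : List (α × Bool)}
    (hl : IsReduced l) (hp : p <+: l) (hne : p ≠ []) : reduce (a :: p) <+: reduce (a :: l) := by
  obtain ⟨t, rfl⟩ := hp
  obtain ⟨b, p, rfl⟩ := List.exists_cons_of_ne_nil hne
  rw [reduce.cons (L := b :: p), reduce.cons (L := b :: p ++ t),
    (hl.infix (List.prefix_append _ t).isInfix).reduce_eq, hl.reduce_eq]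
  simp only [List.cons_append]
  split_ifs <;> simp

/-- Left multiplication by a letter maps the geodesic `[1, x]` into `[1, c x] ∪ {c}`: the
Cayley graph is a tree. -/
theorem isPref_letter_mul {c : Fin n × Bool} {h x : FreeGroup (Fin n)} (hx : IsPref h x) :
    IsPref (mk [c] * h) (mk [c] * x) ∨ mk [c] * h = mk [c] := by
  rw [isPref_iff_prefix] at hx ⊢
  rcases eq_or_ne h 1 with rfl | hh
  · exact Or.inr (mul_one _)
  · left
    rw [toWord_mul, toWord_mul, toWord_mk, reduce_singleton]
    exact reduce_cons_prefix c isReduced_toWord hx (by simpa using hh)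

theorem mk_mul_mem_of_isPref {A : Set (FreeGroup (Fin n))} (hA : IsTree A)
    {L : List (Fin n × Bool)} (hL : IsReduced L) (hLA : mk L ∈ A) {x h : FreeGroup (Fin n)}
    (hx : mk L * x ∈ A) (hpref : IsPref h x) : mk L * h ∈ A := by
  induction L using List.reverseRecOn generalizing x h with
  | nil =>
    rw [← one_eq_mk, one_mul] at hx ⊢
    exact hA.2.2 x hx h hpref
  | append_singleton L c ih =>
    have hL' : IsReduced L := hL.infix (List.prefix_append L [c]).isInfix
    have hL'A : mk L ∈ A := hA.2.2 _ hLA _ <| by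
      rw [isPref_iff_prefix, toWord_mk, toWord_mk, hL.reduce_eq, hL'.reduce_eq]
      exact List.prefix_append L [c]
    rw [← mul_mk, mul_assoc] at hx ⊢
    rcases isPref_letter_mul (c := c) hpref with hpref' | heq
    · exact ih hL' hL'A hx hpref'
    · rwa [heq, mul_mk]

theorem isTree_translate {A : Set (FreeGroup (Fin n))} (hA : IsTree A) {g : FreeGroup (Fin n)}
    (hg : g ∈ A) : IsTree (translate A g) := by
  refine ⟨by simpa [mem_translate] using hg,
    hA.2.1.image (mul_right_injective g⁻¹).injOn, fun x hx h hpref => ?_⟩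
  rw [mem_translate] at hx ⊢
  rw [← mk_toWord (x := g)] at hg hx ⊢
  exact mk_mul_mem_of_isPref hA isReduced_toWord hg hx hpref

theorem finite_image_ball (Z : Set (X n)) (M : ℕ) : ((fun S => ball S M) '' Z).Finite := by
  have hfin : {g : FreeGroup (Fin n) | wlen g ≤ M}.Finite :=
    (List.finite_length_le _ M).preimage toWord_injective.injOn
  exact hfin.finite_subsets.subset (by rintro _ ⟨S, -, rfl⟩ g hg; exact hg.2)

theorem mem_of_ball_eq {S S' : X n} {M : ℕ} (hball : ball S M = ball S' M)
    {g : FreeGroup (Fin n)} (hg : g ∈ S.1) (hgM : wlen g ≤ M) : g ∈ S'.1 := by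
  have hgS : g ∈ ball S M := ⟨hg, hgM⟩
  exact (hball ▸ hgS).1

theorem translate_mem_image_orbit (S : X n) {g : FreeGroup (Fin n)} (hg : g ∈ S.1) :
    translate S.1 g ∈ Subtype.val '' orbit S :=
  ⟨⟨_, isTree_translate S.2 hg⟩, ⟨g, hg, rfl⟩, rfl⟩

section Pumping

variable {S S' : X n} {k M : ℕ}

/-- Pigeonhole on the pairs `(S · pᵢ, S' · pᵢ)` over the prefixes `pᵢ` of `g` yields `i < j`
at which both trees look alike; cutting the segment between `pᵢ` and `pⱼ` out of `g` gives a
word inside the ball where `S` and `S'` agree. -/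
theorem mem_of_ball_eq_of_orbit_ncard_le (hS : (orbit S).Finite) (hS' : (orbit S').Finite)
    (hSk : (orbit S).ncard ≤ k) (hS'k : (orbit S').ncard ≤ k) (hkM : k * k ≤ M)
    (hball : ball S M = ball S' M) {g : FreeGroup (Fin n)} (hg : g ∈ S.1)
    (hlen : wlen g = M + 1) : g ∈ S'.1 := by
  set p : ℕ → FreeGroup (Fin n) := fun i => mk (g.toWord.take i)
  have hp_len (i : ℕ) (hi : i ≤ M + 1) : wlen (p i) = i := by
    simp only [p, wlen_mk_take, hlen, min_eq_left hi]
  have hpS (i : ℕ) : p i ∈ S.1 := S.2.2.2 g hg _ (isPref_mk_take g i)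
  have hpS' (i : ℕ) (hi : i ≤ M) : p i ∈ S'.1 :=
    mem_of_ball_eq hball (hpS i) ((hp_len i (by omega)).trans_le hi)
  have cut (i j : ℕ) (hij : i < j) (hj : j ≤ k * k)
      (hS_eq : translate S.1 (p i) = translate S.1 (p j))
      (hS'_eq : translate S'.1 (p i) = translate S'.1 (p j)) : g ∈ S'.1 := by
    set x := (p j)⁻¹ * g
    have hx_len : wlen (p j) + wlen x = M + 1 := hlen ▸ isPref_mk_take g j
    have hgx : p j * x = g := mul_inv_cancel_left _ _
    have hiS : p i * x ∈ S.1 := mem_translate.1 (hS_eq ▸ mem_translate.2 (hgx ▸ hg))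
    have hiM : wlen (p i * x) ≤ M := by
      have := wlen_mul_le (p i) x
      rw [hp_len i (by omega)] at this
      rw [hp_len j (by omega)] at hx_len
      omega
    have hjS' := mem_translate.1 (hS'_eq ▸ mem_translate.2 (mem_of_ball_eq hball hiS hiM))
    rwa [hgx] at hjS'
  have hcard : ((Subtype.val '' orbit S) ×ˢ (Subtype.val '' orbit S')).ncard
      < (↑(Finset.range (k * k + 1)) : Set ℕ).ncard := by
    rw [Set.ncard_prod, Set.ncard_coe_finset, Finset.card_range, Nat.lt_succ_iff]
    exact Nat.mul_le_mul ((Set.ncard_image_le hS).trans hSk)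
      ((Set.ncard_image_le hS').trans hS'k)
  obtain ⟨i, hi, j, hj, hne, heq⟩ := Set.exists_ne_map_eq_of_ncard_lt_of_maps_to hcard
    (f := fun i => (translate S.1 (p i), translate S'.1 (p i)))
    (fun i hi => ⟨translate_mem_image_orbit S (hpS i),
      translate_mem_image_orbit S' (hpS' i (by simp at hi; omega))⟩)
    ((hS.image _).prod (hS'.image _))
  simp only [Finset.coe_range, Set.mem_Iio, Prod.mk.injEq] at hi hj heq
  rcases hne.lt_or_gt with hij | hji
  · exact cut i j hij (by omega) heq.1 heq.2
  · exact cut j i hji (by omega) heq.1.symm heq.2.symm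

theorem ball_succ_subset (hS : (orbit S).Finite) (hS' : (orbit S').Finite)
    (hSk : (orbit S).ncard ≤ k) (hS'k : (orbit S').ncard ≤ k) (hkM : k * k ≤ M)
    (hball : ball S M = ball S' M) : ball S (M + 1) ⊆ ball S' (M + 1) := by
  rintro g ⟨hg, hgM⟩
  refine ⟨?_, hgM⟩
  rcases (Nat.le_succ_iff.1 hgM) with hgM | hgM
  · exact mem_of_ball_eq hball hg hgM
  · exact mem_of_ball_eq_of_orbit_ncard_le hS hS' hSk hS'k hkM hball hg hgM

theorem eq_of_ball_eq (hS : (orbit S).Finite) (hS' : (orbit S').Finite)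
    (hSk : (orbit S).ncard ≤ k) (hS'k : (orbit S').ncard ≤ k)
    (hball : ball S (k * k) = ball S' (k * k)) : S = S' := by
  have hlarge (M : ℕ) (hM : k * k ≤ M) : ball S M = ball S' M := by
    induction M, hM using Nat.le_induction with
    | base => exact hball
    | succ M hM ih =>
      exact (ball_succ_subset hS hS' hSk hS'k hM ih).antisymm
        (ball_succ_subset hS' hS hS'k hSk hM ih.symm)
  exact eq_of_agree_all fun m =>
    ball_mono_eq (le_max_left m (k * k)) (hlarge _ (le_max_right m (k * k)))

end Pumping

theorem finite_setOf_orbit_ncard_le (k : ℕ) :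
    {S : X n | (orbit S).Finite ∧ (orbit S).ncard ≤ k}.Finite :=
  (finite_image_ball _ (k * k)).of_finite_image fun _ hS _ hS' hball =>
    eq_of_ball_eq hS.1 hS'.1 hS.2 hS'.2 hball

theorem countable_setOf_orbit_finite : {S : X n | (orbit S).Finite}.Countable :=
  (Set.countable_iUnion fun k => (finite_setOf_orbit_ncard_le (n := n) k).countable).mono
    fun _ hS => Set.mem_iUnion.2 ⟨_, show _ ∧ _ from ⟨hS, le_rfl⟩⟩

section Automaton

variable {α β : Type*} (f : α → β ≃. β)

def letterPEquiv (c : α × Bool) : β ≃. β := if c.2 then f c.1 else (f c.1).symm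

def wordPEquiv : List (α × Bool) → β ≃. β
  | [] => PEquiv.refl β
  | c :: L => (letterPEquiv f c).trans (wordPEquiv L)

theorem letterPEquiv_flip (c : α × Bool) :
    letterPEquiv f (c.1, !c.2) = (letterPEquiv f c).symm := by
  obtain ⟨a, _ | _⟩ := c <;> simp [letterPEquiv]

theorem wordPEquiv_append (L₁ L₂ : List (α × Bool)) :
    wordPEquiv f (L₁ ++ L₂) = (wordPEquiv f L₁).trans (wordPEquiv f L₂) := by
  induction L₁ with
  | nil => simp [wordPEquiv]
  | cons c L ih => simp [wordPEquiv, ih, PEquiv.trans_assoc]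

theorem wordPEquiv_invRev (L : List (α × Bool)) :
    wordPEquiv f (invRev L) = (wordPEquiv f L).symm := by
  induction L with
  | nil => simp [wordPEquiv]
  | cons c L ih =>
    have hc : invRev [c] = [(c.1, !c.2)] := rfl
    rw [invRev_cons, wordPEquiv_append, ih, hc, wordPEquiv, wordPEquiv, PEquiv.trans_refl,
      letterPEquiv_flip, wordPEquiv, PEquiv.symm_trans_rev]

theorem wordPEquiv_le_of_red {L₁ L₂ : List (α × Bool)} (h : Red L₁ L₂) :
    wordPEquiv f L₁ ≤ wordPEquiv f L₂ := by
  induction h with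
  | refl => exact le_rfl
  | tail _ hstep ih =>
    refine ih.trans ?_
    rcases hstep with @⟨P, Q, x, b⟩
    have hflip := letterPEquiv_flip f (x, b)
    simp only [wordPEquiv_append, wordPEquiv] at hflip ⊢
    rw [hflip, PEquiv.le_def]
    simp only [PEquiv.mem_trans]
    rintro a c ⟨u, hu, v, hv, w, hw, hc⟩
    exact ⟨u, hu, (letterPEquiv f (x, b)).inj hv ((PEquiv.mem_iff_mem _).1 hw) ▸ hc⟩

variable [DecidableEq α]

def readableSet (b : β) : Set (FreeGroup α) :=
  {g | ∃ b', wordPEquiv f g.toWord b = some b'}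

theorem mk_mem_readableSet {L : List (α × Bool)} {b b' : β} (h : wordPEquiv f L b = some b') :
    mk L ∈ readableSet f b :=
  ⟨b', by rw [toWord_mk]; exact PEquiv.le_def.1 (wordPEquiv_le_of_red f reduce.red) _ _ h⟩

theorem mk_mem_readableSet_iff {L : List (α × Bool)} (hL : IsReduced L) {b : β} :
    mk L ∈ readableSet f b ↔ ∃ b', wordPEquiv f L b = some b' := by
  rw [readableSet, Set.mem_ofPred_eq, toWord_mk, hL.reduce_eq]

end Automaton

section ReadableTrees

variable {β : Type*} (f : Fin n → β ≃. β)

theorem translate_readableSet {b b' : β} {g : FreeGroup (Fin n)}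
    (hg : wordPEquiv f g.toWord b = some b') :
    translate (readableSet f b) g = readableSet f b' := by
  ext x
  rw [mem_translate]
  constructor
  · rintro ⟨c, hc⟩
    have hx : x = mk (invRev g.toWord ++ (g * x).toWord) := by
      rw [← mul_mk, ← toWord_inv, mk_toWord, mk_toWord, inv_mul_cancel_left]
    rw [hx]
    refine mk_mem_readableSet f (b' := c) ?_
    rw [wordPEquiv_append, wordPEquiv_invRev, PEquiv.trans_eq_some]
    exact ⟨b, (PEquiv.eq_some_iff _).2 hg, hc⟩
  · rintro ⟨c, hc⟩
    rw [← mk_toWord (x := g), ← mk_toWord (x := x), mul_mk]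
    refine mk_mem_readableSet f (b' := c) ?_
    rw [wordPEquiv_append, PEquiv.trans_eq_some]
    exact ⟨b', hg, hc⟩

theorem isTree_readableSet {b : β} (hinf : (readableSet f b).Infinite) :
    IsTree (readableSet f b) := by
  refine ⟨⟨b, rfl⟩, hinf, fun g ⟨c, hc⟩ h hpref => ?_⟩
  obtain ⟨t, ht⟩ := isPref_iff_prefix.1 hpref
  rw [← ht, wordPEquiv_append, PEquiv.trans_eq_some] at hc
  obtain ⟨u, hu, -⟩ := hc
  exact ⟨u, hu⟩

theorem orbit_finite_of_eq_readableSet [Finite β] {b : β} {S : X n}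
    (hS : S.1 = readableSet f b) : (orbit S).Finite := by
  refine Set.Finite.of_finite_image ((Set.finite_range (readableSet f)).subset ?_)
    Subtype.val_injective.injOn
  rintro _ ⟨T, ⟨g, hg, hT⟩, rfl⟩
  rw [hS] at hg hT
  obtain ⟨b', hb'⟩ := hg
  exact ⟨b', (hT.trans (translate_readableSet f hb')).symm⟩

end ReadableTrees

theorem isReduced_of_forall_snd_eq_true {α : Type*} {L : List (α × Bool)}
    (h : ∀ c ∈ L, c.2 = true) : IsReduced L := by
  refine List.Pairwise.isChain (List.pairwise_iff_forall_sublist.2 fun hab _ => ?_)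
  rw [h _ (hab.subset (by simp)), h _ (hab.subset (by simp))]

theorem perm_eq_of_forall_add_lt_iff {m : ℕ} {σ τ : Equiv.Perm (Fin m)}
    (h : ∀ i : Fin m, ∀ j < m, ((σ i : ℕ) + j < m ↔ (τ i : ℕ) + j < m)) : σ = τ :=
  Equiv.ext fun i => Fin.ext <| by
    have hσ := h i (m - 1 - σ i) (by omega)
    have hτ := h i (m - 1 - τ i) (by omega)
    omega

section PermutationTrees

variable {m : ℕ}

def succPEquiv (m : ℕ) : Fin m ≃. Fin m where
  toFun v := if h : v.1 + 1 < m then some ⟨v.1 + 1, h⟩ else none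
  invFun w := if h : 0 < w.1 then some ⟨w.1 - 1, by omega⟩ else none
  inv v w := by
    split_ifs <;> simp [Fin.ext_iff] <;> omega

theorem succPEquiv_eq_some {v w : Fin m} : succPEquiv m v = some w ↔ (w : ℕ) = v + 1 := by
  change (if h : v.1 + 1 < m then some ⟨v.1 + 1, h⟩ else none) = some w ↔ _
  split_ifs <;> simp [Fin.ext_iff, eq_comm]; omega

def permLetters (σ : Equiv.Perm (Fin m)) (i : Fin n) : Fin m ≃. Fin m :=
  if i.1 = 0 then succPEquiv m else if i.1 = 1 then σ.toPEquiv else ⊥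

def letterA (hn : 2 ≤ n) : Fin n × Bool := (⟨0, by omega⟩, true)

def letterB (hn : 2 ≤ n) : Fin n × Bool := (⟨1, by omega⟩, true)

theorem letterPEquiv_letterA (hn : 2 ≤ n) (σ : Equiv.Perm (Fin m)) :
    letterPEquiv (permLetters σ) (letterA hn) = succPEquiv m := by
  simp [letterPEquiv, letterA, permLetters]

theorem letterPEquiv_letterB (hn : 2 ≤ n) (σ : Equiv.Perm (Fin m)) :
    letterPEquiv (permLetters σ) (letterB hn) = σ.toPEquiv := by
  simp [letterPEquiv, letterB, permLetters]

theorem wordPEquiv_replicate_letterA (hn : 2 ≤ n) (σ : Equiv.Perm (Fin m)) (k : ℕ)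
    (v w : Fin m) :
    wordPEquiv (permLetters σ) (List.replicate k (letterA hn)) v = some w ↔
      (w : ℕ) = v + k := by
  induction k generalizing v with
  | zero => simp [wordPEquiv, Fin.ext_iff, eq_comm]
  | succ k ih =>
    simp only [List.replicate_succ, wordPEquiv, PEquiv.trans_eq_some]
    simp only [letterPEquiv_letterA, succPEquiv_eq_some, ih]
    exact ⟨fun ⟨u, hu, hw⟩ => by omega,
      fun hw => ⟨⟨v + 1, by omega⟩, rfl, by simp only; omega⟩⟩

theorem wordPEquiv_replicate_letterB (hn : 2 ≤ n) (σ : Equiv.Perm (Fin m)) (k : ℕ)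
    (v : Fin m) :
    wordPEquiv (permLetters σ) (List.replicate k (letterB hn)) v = some ((σ ^ k) v) := by
  induction k generalizing v with
  | zero => rfl
  | succ k ih =>
    rw [List.replicate_succ, wordPEquiv, PEquiv.trans_eq_some]
    exact ⟨σ v, by rw [letterPEquiv_letterB, Equiv.toPEquiv_apply],
      by rw [ih, pow_succ, Equiv.Perm.mul_apply]⟩

theorem readableSet_permLetters_infinite (hn : 2 ≤ n) (σ : Equiv.Perm (Fin m)) (v : Fin m) :
    (readableSet (permLetters σ) v : Set (FreeGroup (Fin n))).Infinite :=
  Set.infinite_of_injective_forall_mem (f := fun k : ℕ => of (letterB hn).1 ^ k)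
    (fun k k' h => by simpa using congrArg FreeGroup.norm h)
    (fun k => ⟨_, by rw [toWord_of_pow]; exact wordPEquiv_replicate_letterB hn σ k v⟩)

def permTree (hn : 2 ≤ n) (σ : Equiv.Perm (Fin (m + 1))) : X n :=
  ⟨readableSet (permLetters σ) 0,
    isTree_readableSet _ (readableSet_permLetters_infinite hn σ 0)⟩

theorem orbit_permTree_finite (hn : 2 ≤ n) (σ : Equiv.Perm (Fin (m + 1))) :
    (orbit (permTree hn σ)).Finite :=
  orbit_finite_of_eq_readableSet _ rfl

def probeWord (hn : 2 ≤ n) (i j : ℕ) : List (Fin n × Bool) :=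
  List.replicate i (letterA hn) ++ letterB hn :: List.replicate j (letterA hn)

theorem isReduced_probeWord (hn : 2 ≤ n) (i j : ℕ) : IsReduced (probeWord hn i j) :=
  isReduced_of_forall_snd_eq_true <| by
    simp +contextual [probeWord, letterA, letterB, or_imp]

theorem wlen_mk_probeWord (hn : 2 ≤ n) (i j : ℕ) :
    wlen (FreeGroup.mk (probeWord hn i j)) = i + j + 1 := by
  rw [wlen, toWord_mk, (isReduced_probeWord hn i j).reduce_eq]
  simp only [probeWord, List.length_append, List.length_replicate, List.length_cons]
  omega

theorem mk_probeWord_mem_permTree_iff (hn : 2 ≤ n) (σ : Equiv.Perm (Fin (m + 1)))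
    (i : Fin (m + 1)) (j : ℕ) :
    FreeGroup.mk (probeWord hn i j) ∈ (permTree hn σ).1 ↔ (σ i : ℕ) + j < m + 1 := by
  change FreeGroup.mk _ ∈ readableSet _ _ ↔ _
  rw [mk_mem_readableSet_iff _ (isReduced_probeWord hn i j)]
  simp only [probeWord, wordPEquiv_append, wordPEquiv, letterPEquiv_letterB,
    PEquiv.trans_eq_some, wordPEquiv_replicate_letterA, Fin.coe_ofNat_eq_mod, Nat.zero_mod,
    zero_add, Equiv.toPEquiv_apply, Option.some.injEq, exists_eq_left', Order.lt_add_one_iff]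
  constructor
  · rintro ⟨b', b, hb, hb'⟩
    cases Fin.ext hb
    omega
  · exact fun h => ⟨⟨_, Nat.lt_succ_of_le h⟩, i, rfl, rfl⟩

theorem ball_permTree_injective (hn : 2 ≤ n) {M : ℕ} (hM : 2 * m + 1 ≤ M) :
    Function.Injective fun σ : Equiv.Perm (Fin (m + 1)) => ball (permTree hn σ) M := by
  intro σ τ h
  refine perm_eq_of_forall_add_lt_iff fun i j hj => ?_
  have hlen : wlen (FreeGroup.mk (probeWord hn i j)) ≤ M := by rw [wlen_mk_probeWord]; omega
  rw [← mk_probeWord_mem_permTree_iff hn σ i j, ← mk_probeWord_mem_permTree_iff hn τ i j]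
  exact ⟨fun hσ => mem_of_ball_eq h hσ hlen, fun hτ => mem_of_ball_eq h.symm hτ hlen⟩

theorem factorial_le_Lam (hn : 2 ≤ n) {M : ℕ} (hM : 2 * m + 1 ≤ M) :
    (m + 1).factorial ≤ Lam {S : X n | (orbit S).Finite} M :=
  calc (m + 1).factorial = Nat.card (Equiv.Perm (Fin (m + 1))) := by
        rw [Nat.card_perm, Nat.card_fin]
    _ = (Set.range fun σ => ball (permTree hn σ) M).ncard :=
      (Set.ncard_range_of_injective (ball_permTree_injective hn hM)).symm
    _ ≤ Lam {S : X n | (orbit S).Finite} M :=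
      Set.ncard_le_ncard (by rintro _ ⟨σ, rfl⟩; exact ⟨_, orbit_permTree_finite hn σ, rfl⟩)
        (finite_image_ball _ M)

end PermutationTrees

theorem tendsto_log_factorial_div_atTop :
    Tendsto (fun k : ℕ => Real.log k.factorial / k) atTop atTop := by
  have hlog : Tendsto (fun k : ℕ => Real.log k - 1) atTop atTop :=
    tendsto_atTop_add_const_right _ _ (Real.tendsto_log_atTop.comp tendsto_natCast_atTop_atTop)
  refine tendsto_atTop_mono' _ ?_ hlog
  filter_upwards [eventually_ne_atTop 0] with k hk
  have hk' : (0 : ℝ) < k := by positivity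
  have hstirling := Stirling.le_log_factorial_stirling hk
  have hlog_k : 0 ≤ Real.log k := Real.log_natCast_nonneg k
  have hlog_2π : 0 ≤ Real.log (2 * Real.pi) := Real.log_nonneg (by linarith [Real.pi_gt_three])
  rw [le_div_iff₀ hk']
  nlinarith

theorem tendsto_log_Lam_div_atTop (hn : 2 ≤ n) :
    Tendsto (fun M : ℕ => Real.log (Lam {S : X n | (orbit S).Finite} M) / M) atTop atTop := by
  set k : ℕ → ℕ := fun M => (M - 1) / 2 + 1
  have hk : Tendsto k atTop atTop :=
    tendsto_atTop_atTop.2 fun b => ⟨2 * b, fun M hM => by simp only [k]; omega⟩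
  refine tendsto_atTop_mono' _ ?_
    ((tendsto_log_factorial_div_atTop.comp hk).atTop_div_const two_pos)
  filter_upwards [eventually_ne_atTop 0] with M hM
  have hM_le : (M : ℝ) ≤ 2 * k M := by
    have : M ≤ 2 * k M := by simp only [k]; omega
    exact_mod_cast this
  have hfact : ((k M).factorial : ℝ) ≤ Lam {S : X n | (orbit S).Finite} M := by
    exact_mod_cast factorial_le_Lam hn (by omega)
  calc Real.log (k M).factorial / k M / 2 = Real.log (k M).factorial / (2 * k M) := by
        rw [div_div, mul_comm]
    _ ≤ Real.log (k M).factorial / M :=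
        div_le_div_of_nonneg_left (Real.log_natCast_nonneg _) (by positivity) hM_le
    _ ≤ Real.log (Lam {S : X n | (orbit S).Finite} M) / M :=
        div_le_div_of_nonneg_right (Real.log_le_log (by positivity) hfact) (by positivity)

theorem tendsto_ofReal_div_natCast_nhds_top {u : ℕ → ℝ}
    (hu : Tendsto (fun m : ℕ => u m / m) atTop atTop) :
    Tendsto (fun m : ℕ => ENNReal.ofReal (u m) / (m : ℝ≥0∞)) atTop (𝓝 ⊤) := by
  refine (ENNReal.tendsto_ofReal_atTop.comp hu).congr' ?_
  filter_upwards [eventually_ne_atTop 0] with m hm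
  rw [Function.comp_apply, ENNReal.ofReal_div_of_pos (by positivity), ENNReal.ofReal_natCast]

/-- The set `𝒞` of trees with finite (periodic) orbits has Hausdorff dimension zero,
while its lower (hence also upper) box dimension is infinite. -/
theorem periodic_trees_dimensions (n : ℕ) (hn : 2 ≤ n) :
    dimH {S : X n | (orbit S).Finite} = 0 ∧
    lowerBox {S : X n | (orbit S).Finite} = ⊤ ∧
    upperBox {S : X n | (orbit S).Finite} = ⊤ := by
  have hbox := tendsto_ofReal_div_natCast_nhds_top (tendsto_log_Lam_div_atTop hn)
  exact ⟨countable_setOf_orbit_finite.dimH_zero, hbox.liminf_eq, hbox.limsup_eq⟩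

end GraphTrees
end
end
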